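/- arXiv:1507.01585 — 4 statements merged into one kernel-verified Lean document; each statement's English description precedes it below -/
import Mathlib

section
/- Theorem (lower bound for constrained MDPs): Let X = {x ∈ ℝ^n : 0 ≤ x ≤ d, 1^T x = 1} and C = ∩_{x∈X} C(x) where C(x) = {Q ∈ ℝ^{n×p} : Q1 = 1, Q ≥ 0, M(Q)x ≤ d}. Define Û_N = r_N and, for t = N-1,…,1, Q̂_t = argmax_{Q∈C} min_{x∈X} x^T (r_t(Q) + M_t(Q)^T Û_{t+1}) and Û_t = r_t(Q̂_t) + M_t(Q̂_t)^T Û_{t+1}. Then the optimal constrained value satisfies v_N^* ≥ x_1^T Û_1 for any feasible initial distribution x_1 ∈ X, and the policy (Q̂_1,…,Q̂_{N-1}) is feasible. -/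
open Matrix Finset

/-- Row-stochastic policy matrix. -/
def rowStoch {n p : ℕ} (Q : Fin n → Fin p → ℝ) : Prop :=
  (∀ s a, 0 ≤ Q s a) ∧ ∀ s, ∑ a, Q s a = 1

/-- Transition matrix induced by a randomized policy. -/
def Mof {n p : ℕ} (pr : Fin n → Fin p → Fin n → ℝ) (Q : Fin n → Fin p → ℝ) :
    Matrix (Fin n) (Fin n) ℝ :=
  Matrix.of fun i j => ∑ a, Q j a * pr j a i

/-- Expected one-step reward vector under a randomized policy. -/
def rvec {n p : ℕ} (r : Fin n → Fin p → ℝ) (Q : Fin n → Fin p → ℝ) : Fin n → ℝ :=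
  fun s => ∑ a, Q s a * r s a

/-- Capped probability simplex `X = {x : 0 ≤ x ≤ d, 1ᵀx = 1}`. -/
def capped (n : ℕ) (d : Fin n → ℝ) : Set (Fin n → ℝ) :=
  {x | (∀ i, 0 ≤ x i) ∧ (∀ i, x i ≤ d i) ∧ ∑ i, x i = 1}

/-- Uniformly feasible policies at time `t`: `C = ∩_{x∈X} C(x)` with
`C(x) = {Q : Q1 = 1, Q ≥ 0, M(Q)x ≤ d}`. -/
def Cset {n p : ℕ} (d : Fin n → ℝ) (pr : Fin n → Fin p → Fin n → ℝ) :
    Set (Fin n → Fin p → ℝ) :=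
  {Q | rowStoch Q ∧ ∀ x ∈ capped n d, ∀ i, (Mof pr Q).mulVec x i ≤ d i}

/-- State-distribution trajectory `x₁ = x`, `x_{t+1} = M_t x_t`. -/
def traj {n : ℕ} (M : ℕ → Matrix (Fin n) (Fin n) ℝ) (x : Fin n → ℝ) : ℕ → Fin n → ℝ
  | 0 => x
  | t + 1 => (M t).mulVec (traj M x t)

/-- The guarantee vectors `Û`: `uhat rv M rN k t` is `Û_t` when `k` decision
epochs remain, i.e. `Û_N = r_N` and `Û_t = rv t + M_tᵀ Û_{t+1}`. -/
def uhat {n : ℕ} (rv : ℕ → Fin n → ℝ) (M : ℕ → Matrix (Fin n) (Fin n) ℝ)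
    (rN : Fin n → ℝ) : ℕ → ℕ → Fin n → ℝ
  | 0, _ => rN
  | k + 1, t => rv t + (M t)ᵀ.mulVec (uhat rv M rN k (t + 1))

lemma dot_transpose_aux {n : ℕ} (M : Matrix (Fin n) (Fin n) ℝ) (x u : Fin n → ℝ) :
    x ⬝ᵥ (Mᵀ.mulVec u) = (M.mulVec x) ⬝ᵥ u := by
  simp only [Matrix.mulVec, dotProduct, Matrix.transpose_apply, Finset.mul_sum,
    Finset.sum_mul]
  rw [Finset.sum_comm]
  exact Finset.sum_congr rfl fun i _ => Finset.sum_congr rfl fun j _ => by ring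

/-- `Mof pr Q` has nonnegative entries and column sums `1`. -/
lemma Mof_nonneg {n p : ℕ} {pr : Fin n → Fin p → Fin n → ℝ} {Q : Fin n → Fin p → ℝ}
    (hpr : ∀ s a, (∀ j, 0 ≤ pr s a j) ∧ (∑ j, pr s a j = 1)) (hQ : rowStoch Q)
    (i j : Fin n) : 0 ≤ Mof pr Q i j := by
  show (0:ℝ) ≤ ∑ a, Q j a * pr j a i
  exact Finset.sum_nonneg fun a _ => mul_nonneg (hQ.1 j a) ((hpr j a).1 i)

lemma Mof_colsum {n p : ℕ} {pr : Fin n → Fin p → Fin n → ℝ} {Q : Fin n → Fin p → ℝ}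
    (hpr : ∀ s a, (∀ j, 0 ≤ pr s a j) ∧ (∑ j, pr s a j = 1)) (hQ : rowStoch Q)
    (j : Fin n) : ∑ i, Mof pr Q i j = 1 := by
  unfold Mof
  simp only [Matrix.of_apply]
  rw [Finset.sum_comm]
  calc ∑ a, ∑ i, Q j a * pr j a i = ∑ a, Q j a * ∑ i, pr j a i := by
        simp [Finset.mul_sum]
    _ = 1 := by simp only [(hpr j _).2]; simpa using hQ.2 j

/-- A column-stochastic matrix preserves nonnegativity and total mass. -/
lemma mulVec_simplex {n : ℕ} {M : Matrix (Fin n) (Fin n) ℝ}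
    (hM0 : ∀ i j, 0 ≤ M i j) (hM1 : ∀ j, ∑ i, M i j = 1)
    {x : Fin n → ℝ} (hx0 : ∀ i, 0 ≤ x i) (hx1 : ∑ i, x i = 1) :
    (∀ i, 0 ≤ M.mulVec x i) ∧ ∑ i, M.mulVec x i = 1 := by
  constructor
  · intro i
    show (0:ℝ) ≤ ∑ j, M i j * x j
    exact Finset.sum_nonneg fun j _ => mul_nonneg (hM0 i j) (hx0 j)
  · simp only [Matrix.mulVec, dotProduct]
    rw [Finset.sum_comm]
    calc ∑ j, ∑ i, M i j * x j = ∑ j, (∑ i, M i j) * x j := by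
          simp [Finset.sum_mul]
      _ = 1 := by simp only [hM1, one_mul, hx1]

/-- Telescoping identity: the backward value vectors integrate against the
trajectory to the total expected reward. -/
lemma uhat_telescope {n : ℕ} (rv : ℕ → Fin n → ℝ) (M : ℕ → Matrix (Fin n) (Fin n) ℝ)
    (rN : Fin n → ℝ) (x : Fin n → ℝ) :
    ∀ (k t : ℕ), traj M x t ⬝ᵥ uhat rv M rN k t
      = (∑ s ∈ Finset.Ico t (t + k), traj M x s ⬝ᵥ rv s) + traj M x (t + k) ⬝ᵥ rN := by
  intro k
  induction k with
  | zero => intro t; simp [uhat]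
  | succ k ih =>
    intro t
    have step : traj M x (t + 1) = (M t).mulVec (traj M x t) := rfl
    have : traj M x t ⬝ᵥ uhat rv M rN (k + 1) t
        = traj M x t ⬝ᵥ rv t + traj M x (t + 1) ⬝ᵥ uhat rv M rN k (t + 1) := by
      simp only [uhat, dotProduct_add, step, dot_transpose_aux]
    rw [this, ih (t + 1)]
    rw [Finset.sum_eq_sum_Ico_succ_bot (by omega : t < t + (k + 1))]
    rw [show t + 1 + k = t + (k + 1) by ring]
    ring

/-- lower bound for constrained MDPs: with `Û_N = r_N`,
`Q̂_t = argmax_{Q ∈ C} min_{x ∈ X} xᵀ(r_t(Q) + M_t(Q)ᵀ Û_{t+1})` and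
`Û_t = r_t(Q̂_t) + M_t(Q̂_t)ᵀ Û_{t+1}`, the policy `(Q̂_1, …, Q̂_{N-1})` is
feasible (the trajectory stays in `X`) and the optimal constrained value
satisfies `v_N^* ≥ x₁ᵀ Û₁` for any feasible initial distribution `x₁ ∈ X`. -/
theorem stmt5 {n p N : ℕ}
    (d : Fin n → ℝ)
    (pr : ℕ → Fin n → Fin p → Fin n → ℝ)
    (hpr : ∀ t s a, (∀ j, 0 ≤ pr t s a j) ∧ (∑ j, pr t s a j = 1))
    (r : ℕ → Fin n → Fin p → ℝ) (rN : Fin n → ℝ)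
    (Qhat : ℕ → Fin n → Fin p → ℝ)
    (hfeas : ∀ t, t < N → Qhat t ∈ Cset d (pr t))
    (hopt : ∀ t, t < N → ∀ Q ∈ Cset d (pr t),
      sInf {w : ℝ | ∃ x ∈ capped n d,
          w = x ⬝ᵥ (rvec (r t) Q + (Mof (pr t) Q)ᵀ.mulVec
            (uhat (fun u => rvec (r u) (Qhat u)) (fun u => Mof (pr u) (Qhat u)) rN
              (N - (t + 1)) (t + 1)))}
        ≤ sInf {w : ℝ | ∃ x ∈ capped n d,
          w = x ⬝ᵥ (rvec (r t) (Qhat t) + (Mof (pr t) (Qhat t))ᵀ.mulVec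
            (uhat (fun u => rvec (r u) (Qhat u)) (fun u => Mof (pr u) (Qhat u)) rN
              (N - (t + 1)) (t + 1)))})
    (x1 : Fin n → ℝ) (hx1 : x1 ∈ capped n d) :
    (∀ t, t ≤ N → traj (fun u => Mof (pr u) (Qhat u)) x1 t ∈ capped n d) ∧
    x1 ⬝ᵥ uhat (fun u => rvec (r u) (Qhat u)) (fun u => Mof (pr u) (Qhat u)) rN N 0
      ≤ sSup {v : ℝ | ∃ Q : ℕ → Fin n → Fin p → ℝ,
          (∀ t, t < N → rowStoch (Q t)) ∧
          (∀ t, t ≤ N → ∀ i, traj (fun u => Mof (pr u) (Q u)) x1 t i ≤ d i) ∧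
          v = (∑ t ∈ Finset.range N,
                traj (fun u => Mof (pr u) (Q u)) x1 t ⬝ᵥ rvec (r t) (Q t))
              + traj (fun u => Mof (pr u) (Q u)) x1 N ⬝ᵥ rN} := by
  -- abbreviations
  set Mh : ℕ → Matrix (Fin n) (Fin n) ℝ := fun u => Mof (pr u) (Qhat u) with hMh
  -- Part 1: feasibility of the trajectory under Qhat
  have part1 : ∀ t, t ≤ N → traj Mh x1 t ∈ capped n d := by
    intro t
    induction t with
    | zero => intro _; exact hx1
    | succ t ih =>
      intro ht
      have htN : t < N := Nat.lt_of_succ_le ht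
      have hcap := ih (Nat.le_of_lt htN)
      obtain ⟨hQrs, hQd⟩ := hfeas t htN
      have h0 : ∀ i j, 0 ≤ Mh t i j := Mof_nonneg (hpr t) hQrs
      have h1 : ∀ j, ∑ i, Mh t i j = 1 := Mof_colsum (hpr t) hQrs
      have hstep := mulVec_simplex h0 h1 hcap.1 hcap.2.2
      exact ⟨hstep.1, fun i => hQd _ hcap i, hstep.2⟩
  refine ⟨part1, ?_⟩
  -- trajectory entries under any rowStoch policy are a probability dist
  have genTraj : ∀ (Q : ℕ → Fin n → Fin p → ℝ), (∀ t, t < N → rowStoch (Q t)) →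
      ∀ t, t ≤ N → (∀ i, 0 ≤ traj (fun u => Mof (pr u) (Q u)) x1 t i) ∧
        ∑ i, traj (fun u => Mof (pr u) (Q u)) x1 t i = 1 := by
    intro Q hQ t
    induction t with
    | zero => intro _; exact ⟨hx1.1, hx1.2.2⟩
    | succ t ih =>
      intro ht
      have htN : t < N := Nat.lt_of_succ_le ht
      have h := ih (Nat.le_of_lt htN)
      exact mulVec_simplex (Mof_nonneg (hpr t) (hQ t htN)) (Mof_colsum (hpr t) (hQ t htN))
        h.1 h.2
  -- dot product of a probability vector with any vector is ≤ sum of abs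
  have dotBound : ∀ (y w : Fin n → ℝ), (∀ i, 0 ≤ y i) → (∑ i, y i = 1) →
      y ⬝ᵥ w ≤ ∑ i, |w i| := by
    intro y w hy0 hy1
    have hyle : ∀ i, y i ≤ 1 := by
      intro i
      calc y i ≤ ∑ j, y j := Finset.single_le_sum (fun j _ => hy0 j) (Finset.mem_univ i)
        _ = 1 := hy1
    refine Finset.sum_le_sum fun i _ => ?_
    calc y i * w i ≤ y i * |w i| := by
          exact mul_le_mul_of_nonneg_left (le_abs_self _) (hy0 i)
      _ ≤ 1 * |w i| := mul_le_mul_of_nonneg_right (hyle i) (abs_nonneg _)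
      _ = |w i| := one_mul _
  -- |rvec| bound
  have rvecBound : ∀ (t : ℕ) (Q : Fin n → Fin p → ℝ), rowStoch Q →
      ∀ i, |rvec (r t) Q i| ≤ ∑ a, |r t i a| := by
    intro t Q hQ i
    have hQle : ∀ a, Q i a ≤ 1 := by
      intro a
      calc Q i a ≤ ∑ b, Q i b := Finset.single_le_sum (fun b _ => hQ.1 i b) (Finset.mem_univ a)
        _ = 1 := hQ.2 i
    calc |rvec (r t) Q i| ≤ ∑ a, |Q i a * r t i a| := Finset.abs_sum_le_sum_abs _ _
      _ ≤ ∑ a, |r t i a| := by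
          refine Finset.sum_le_sum fun a _ => ?_
          rw [abs_mul, abs_of_nonneg (hQ.1 i a)]
          calc Q i a * |r t i a| ≤ 1 * |r t i a| :=
                mul_le_mul_of_nonneg_right (hQle a) (abs_nonneg _)
            _ = |r t i a| := one_mul _
  -- the target set
  set S : Set ℝ := {v : ℝ | ∃ Q : ℕ → Fin n → Fin p → ℝ,
          (∀ t, t < N → rowStoch (Q t)) ∧
          (∀ t, t ≤ N → ∀ i, traj (fun u => Mof (pr u) (Q u)) x1 t i ≤ d i) ∧
          v = (∑ t ∈ Finset.range N,
                traj (fun u => Mof (pr u) (Q u)) x1 t ⬝ᵥ rvec (r t) (Q t))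
              + traj (fun u => Mof (pr u) (Q u)) x1 N ⬝ᵥ rN} with hS
  -- S is bounded above
  have hbdd : BddAbove S := by
    refine ⟨(∑ t ∈ Finset.range N, ∑ i, ∑ a, |r t i a|) + ∑ i, |rN i|, ?_⟩
    rintro v ⟨Q, hQrs, hQd, rfl⟩
    have hT := genTraj Q hQrs
    gcongr (∑ t ∈ Finset.range N, ?_) + ?_ with t htmem
    · have htN : t < N := Finset.mem_range.mp htmem
      have h := hT t (Nat.le_of_lt htN)
      calc traj (fun u => Mof (pr u) (Q u)) x1 t ⬝ᵥ rvec (r t) (Q t)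
          ≤ ∑ i, |rvec (r t) (Q t) i| := dotBound _ _ h.1 h.2
        _ ≤ ∑ i, ∑ a, |r t i a| :=
            Finset.sum_le_sum fun i _ => rvecBound t (Q t) (hQrs t htN) i
    · have h := hT N le_rfl
      exact dotBound _ _ h.1 h.2
  -- Qhat's value is in S and equals x1 ⬝ᵥ uhat N 0
  have hval : x1 ⬝ᵥ uhat (fun u => rvec (r u) (Qhat u)) Mh rN N 0
      = (∑ t ∈ Finset.range N, traj Mh x1 t ⬝ᵥ rvec (r t) (Qhat t)) + traj Mh x1 N ⬝ᵥ rN := by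
    have h := uhat_telescope (fun u => rvec (r u) (Qhat u)) Mh rN x1 N 0
    have h0 : traj Mh x1 0 = x1 := rfl
    rw [Finset.range_eq_Ico]
    rw [h0] at h
    simpa using h
  have hmem : x1 ⬝ᵥ uhat (fun u => rvec (r u) (Qhat u)) Mh rN N 0 ∈ S := by
    refine ⟨Qhat, fun t ht => (hfeas t ht).1, fun t ht i => ((part1 t ht).2.1 i), hval⟩
  exact le_csSup hbdd hmem
end

section
/- Induction step of the safety lower bound: if J_{t+1}(x) ≥ x^T Û_{t+1} for all x ∈ X, where J_t(x) = max_{Q ∈ C(x)} { x^T r_t(Q) + J_{t+1}(M_t(Q)x) }, and Q̂_t ∈ C ⊆ C(x) achieves max_{Q∈C} min_{x'∈X} x'^T(r_t(Q)+M_t(Q)^T Û_{t+1}), then J_t(x) ≥ x^T Û_t for all x ∈ X with Û_t = r_t(Q̂_t) + M_t(Q̂_t)^T Û_{t+1}. -/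
open Matrix Finset

/-- Column-stochastic matrix. -/
def colStoch {n : ℕ} (M : Matrix (Fin n) (Fin n) ℝ) : Prop :=
  (∀ i j, 0 ≤ M i j) ∧ ∀ j, ∑ i, M i j = 1

/-- induction step of the safety lower bound:
if `J_{t+1}(x) ≥ xᵀ Û_{t+1}` on `X`, `J_t(x) = max_{Q ∈ C(x)}
{xᵀ r_t(Q) + J_{t+1}(M_t(Q) x)}`, and `Q̂ ∈ C ⊆ C(x)` achieves
`max_{Q ∈ C} min_{x' ∈ X} x'ᵀ (r_t(Q) + M_t(Q)ᵀ Û_{t+1})`, then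
`J_t(x) ≥ xᵀ Û_t` on `X`, where `Û_t = r_t(Q̂) + M_t(Q̂)ᵀ Û_{t+1}`. -/
theorem stmt6 {n p : ℕ}
    (d : Fin n → ℝ)
    (Mf : (Fin n → Fin p → ℝ) → Matrix (Fin n) (Fin n) ℝ)
    (rf : (Fin n → Fin p → ℝ) → (Fin n → ℝ))
    (hMcol : ∀ Q : Fin n → Fin p → ℝ, rowStoch Q → colStoch (Mf Q))
    (Unext : Fin n → ℝ) (Jnext J : (Fin n → ℝ) → ℝ)
    (hind : ∀ x ∈ capped n d, x ⬝ᵥ Unext ≤ Jnext x)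
    (hJ : ∀ x ∈ capped n d,
      IsGreatest {v : ℝ | ∃ Q : Fin n → Fin p → ℝ,
          (rowStoch Q ∧ ∀ i, (Mf Q).mulVec x i ≤ d i) ∧
          v = x ⬝ᵥ rf Q + Jnext ((Mf Q).mulVec x)}
        (J x))
    (Qhat : Fin n → Fin p → ℝ)
    (hQhatC : rowStoch Qhat ∧ ∀ x ∈ capped n d, ∀ i, (Mf Qhat).mulVec x i ≤ d i)
    (hQhatMax : ∀ Q : Fin n → Fin p → ℝ,
      (rowStoch Q ∧ ∀ x ∈ capped n d, ∀ i, (Mf Q).mulVec x i ≤ d i) →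
      sInf {w : ℝ | ∃ x ∈ capped n d, w = x ⬝ᵥ (rf Q + (Mf Q)ᵀ.mulVec Unext)}
        ≤ sInf {w : ℝ | ∃ x ∈ capped n d,
            w = x ⬝ᵥ (rf Qhat + (Mf Qhat)ᵀ.mulVec Unext)}) :
    ∀ x ∈ capped n d, x ⬝ᵥ (rf Qhat + (Mf Qhat)ᵀ.mulVec Unext) ≤ J x := by

  intro x hx
  obtain ⟨hQ0, hQd⟩ := hQhatC
  obtain ⟨hM0, hM1⟩ := hMcol Qhat hQ0
  -- M x ∈ capped
  have hMx : (Mf Qhat).mulVec x ∈ capped n d := by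
    refine ⟨fun i => ?_, hQd x hx, ?_⟩
    · simp only [Matrix.mulVec, dotProduct]
      exact Finset.sum_nonneg fun j _ => mul_nonneg (hM0 i j) (hx.1 j)
    · calc ∑ i, (Mf Qhat).mulVec x i = ∑ j, (∑ i, Mf Qhat i j) * x j := by
            simp only [Matrix.mulVec, dotProduct, Finset.sum_mul]
            exact Finset.sum_comm
        _ = 1 := by simp [hM1, hx.2.2]
  have hmem : x ⬝ᵥ rf Qhat + Jnext ((Mf Qhat).mulVec x) ≤ J x :=
    (hJ x hx).2 ⟨Qhat, ⟨hQ0, hQd x hx⟩, rfl⟩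
  have hdp : x ⬝ᵥ (Mf Qhat)ᵀ.mulVec Unext = (Mf Qhat).mulVec x ⬝ᵥ Unext := by
    rw [Matrix.mulVec_transpose, dotProduct_comm, ← Matrix.dotProduct_mulVec,
      dotProduct_comm]
  calc x ⬝ᵥ (rf Qhat + (Mf Qhat)ᵀ.mulVec Unext)
      = x ⬝ᵥ rf Qhat + (Mf Qhat).mulVec x ⬝ᵥ Unext := by
        rw [dotProduct_add, hdp]
    _ ≤ x ⬝ᵥ rf Qhat + Jnext ((Mf Qhat).mulVec x) := by
        linarith [hind _ hMx]
    _ ≤ J x := hmem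
end

section
/- Characterization of uniformly safe stochastic matrices: a column-stochastic matrix M ∈ ℝ^{n×n} satisfies Mx ≤ d for all x in X = {x : 0 ≤ x ≤ d, 1^T x = 1} if and only if there exist matrices S ≥ 0, K ≥ 0 and a vector s ∈ ℝ^n such that K = M + S + s·1^T and s + d ≥ K d. -/
open Matrix Finset

lemma key {n : ℕ} (hn : 0 < n) (d : Fin n → ℝ) (hd0 : ∀ i, 0 ≤ d i)
    (hds : 1 ≤ ∑ i, d i) (m : Fin n → ℝ) :
    ∃ σ : ℝ, ∃ x : Fin n → ℝ, (∀ i, 0 ≤ x i) ∧ (∀ i, x i ≤ d i) ∧ (∑ i, x i = 1) ∧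
      σ + ∑ j, d j * max (m j - σ) 0 = ∑ j, m j * x j := by
  classical
  haveI : Nonempty (Fin n) := ⟨⟨0, hn⟩⟩
  set V : Finset ℝ := Finset.image m Finset.univ with hV
  have hVne : V.Nonempty := ⟨m ⟨0, hn⟩, Finset.mem_image_of_mem _ (Finset.mem_univ _)⟩
  set T : Finset ℝ :=
    V.filter (fun v => 1 ≤ ∑ j ∈ Finset.univ.filter (fun j => v ≤ m j), d j) with hT
  have hTne : T.Nonempty := by
    refine ⟨V.min' hVne, ?_⟩
    rw [hT, Finset.mem_filter]
    refine ⟨V.min'_mem hVne, ?_⟩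
    have heq : Finset.univ.filter (fun j => V.min' hVne ≤ m j) = Finset.univ := by
      apply Finset.filter_true_of_mem
      intro j _
      exact V.min'_le _ (Finset.mem_image_of_mem _ (Finset.mem_univ _))
    rw [heq]; exact hds
  set σ : ℝ := T.max' hTne with hσ
  have hσT : σ ∈ T := T.max'_mem hTne
  have hge : 1 ≤ ∑ j ∈ Finset.univ.filter (fun j => σ ≤ m j), d j := by
    rw [hT] at hσT; exact (Finset.mem_filter.mp hσT).2
  set A : Finset (Fin n) := Finset.univ.filter (fun j => σ < m j) with hA
  set B : Finset (Fin n) := Finset.univ.filter (fun j => m j = σ) with hB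
  have hle : ∑ j ∈ A, d j ≤ 1 := by
    by_cases hAe : A.Nonempty
    · set W : Finset ℝ := Finset.image m A with hW
      have hWne : W.Nonempty := hAe.image m
      set v' : ℝ := W.min' hWne with hv'
      have hv'W : v' ∈ W := W.min'_mem hWne
      obtain ⟨j0, hj0A, hj0⟩ := Finset.mem_image.mp hv'W
      have hv'σ : σ < v' := by
        rw [← hj0]; exact (Finset.mem_filter.mp hj0A).2
      have hAeq : A = Finset.univ.filter (fun j => v' ≤ m j) := by
        ext j
        simp only [hA, Finset.mem_filter, Finset.mem_univ, true_and]
        constructor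
        · intro hj
          exact W.min'_le _ (Finset.mem_image_of_mem _ (by
            simp [hA, Finset.mem_filter, hj]))
        · intro hj; exact lt_of_lt_of_le hv'σ hj
      have hv'V : v' ∈ V := by
        rw [← hj0]; exact Finset.mem_image_of_mem _ (Finset.mem_univ _)
      have hv'T : v' ∉ T := by
        intro hmem
        exact absurd (T.le_max' _ hmem) (not_le.mpr hv'σ)
      have : ¬ (1 ≤ ∑ j ∈ Finset.univ.filter (fun j => v' ≤ m j), d j) := by
        intro h
        exact hv'T (by rw [hT]; exact Finset.mem_filter.mpr ⟨hv'V, h⟩)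
      rw [hAeq]
      exact le_of_lt (not_le.mp this)
    · rw [Finset.not_nonempty_iff_eq_empty] at hAe
      rw [hAe]; simp
  have hsplit : ∑ j ∈ Finset.univ.filter (fun j => σ ≤ m j), d j
      = ∑ j ∈ A, d j + ∑ j ∈ B, d j := by
    have hU : Finset.univ.filter (fun j => σ ≤ m j) = A ∪ B := by
      ext j
      simp only [hA, hB, Finset.mem_filter, Finset.mem_union, Finset.mem_univ, true_and]
      constructor
      · intro h
        rcases lt_or_eq_of_le h with h1 | h1
        · exact Or.inl h1
        · exact Or.inr h1.symm
      · rintro (h | h)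
        · exact le_of_lt h
        · exact le_of_eq h.symm
    have hdisj : Disjoint A B := by
      rw [Finset.disjoint_left]
      intro j hjA hjB
      rw [hA, Finset.mem_filter] at hjA
      rw [hB, Finset.mem_filter] at hjB
      exact absurd hjB.2 (ne_of_gt hjA.2)
    rw [hU, Finset.sum_union hdisj]
  set D : ℝ := ∑ j ∈ B, d j with hD
  set r : ℝ := 1 - ∑ j ∈ A, d j with hr
  have hr0 : 0 ≤ r := by rw [hr]; linarith
  have hrD : r ≤ D := by rw [hr, hD]; linarith [hsplit ▸ hge]
  have hD0 : 0 ≤ D := Finset.sum_nonneg (fun j _ => hd0 j)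
  refine ⟨σ, fun j => (if σ < m j then d j else 0) + (if m j = σ then r * d j / D else 0),
    ?_, ?_, ?_, ?_⟩
  · intro i
    apply add_nonneg
    · split <;> [exact hd0 i; exact le_refl 0]
    · split
      · exact div_nonneg (mul_nonneg hr0 (hd0 i)) hD0
      · exact le_refl 0
  · intro i
    dsimp only
    by_cases h1 : σ < m i
    · have h2 : ¬ (m i = σ) := ne_of_gt h1
      simp [h1, h2]
    · by_cases h2 : m i = σ
      · rw [if_neg h1, if_pos h2, zero_add]
        by_cases hDz : D = 0
        · have hrz : r = 0 := le_antisymm (hDz ▸ hrD) hr0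
          rw [hrz]; simpa using hd0 i
        · have hDpos : 0 < D := lt_of_le_of_ne hD0 (Ne.symm hDz)
          rw [div_le_iff₀ hDpos]
          calc r * d i ≤ D * d i := mul_le_mul_of_nonneg_right hrD (hd0 i)
            _ = d i * D := mul_comm _ _
      · simp [h1, h2, hd0 i]
  · rw [Finset.sum_add_distrib]
    rw [← Finset.sum_filter, ← Finset.sum_filter]
    have hBsum : ∑ j ∈ B, r * d j / D = r := by
      by_cases hDz : D = 0
      · have hrz : r = 0 := le_antisymm (hDz ▸ hrD) hr0
        rw [hrz]; simp
      · rw [← Finset.sum_div, ← Finset.mul_sum, ← hD, mul_div_assoc, div_self hDz, mul_one]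
    rw [← hA, hBsum, hr]; ring
  · have hlhs : ∑ j, d j * max (m j - σ) 0 = ∑ j ∈ A, d j * (m j - σ) := by
      rw [hA, Finset.sum_filter]
      apply Finset.sum_congr rfl
      intro j _
      by_cases h : σ < m j
      · rw [if_pos h, max_eq_left (by linarith)]
      · rw [if_neg h, max_eq_right (by linarith), mul_zero]
    have hrhs : ∑ j, m j * ((if σ < m j then d j else 0) + (if m j = σ then r * d j / D else 0))
        = ∑ j ∈ A, m j * d j + σ * r := by
      have e1 : ∀ j : Fin n, m j * ((if σ < m j then d j else 0) + (if m j = σ then r * d j / D else 0))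
          = (if σ < m j then m j * d j else 0) + (if m j = σ then σ * (r * d j / D) else 0) := by
        intro j
        by_cases h1 : σ < m j
        · have h2 : ¬ (m j = σ) := ne_of_gt h1
          simp [h1, h2]
        · by_cases h2 : m j = σ
          · rw [if_neg h1, if_pos h2, if_neg h1, if_pos h2, h2]; ring
          · simp [h1, h2]
      rw [Finset.sum_congr rfl (fun j _ => e1 j), Finset.sum_add_distrib,
        ← Finset.sum_filter, ← Finset.sum_filter, ← hA, ← hB]
      congr 1
      by_cases hDz : D = 0
      · have hrz : r = 0 := le_antisymm (hDz ▸ hrD) hr0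
        rw [hrz]; simp
      · have : ∑ j ∈ B, σ * (r * d j / D) = σ * r * (∑ j ∈ B, d j) / D := by
          rw [Finset.sum_congr rfl (fun j _ => by ring : ∀ j ∈ B, σ * (r * d j / D) = σ * r / D * d j),
            ← Finset.mul_sum]
          ring
        rw [this, ← hD, mul_div_assoc, div_self hDz, mul_one]
    have e2 : ∑ j ∈ A, d j * (m j - σ) = ∑ j ∈ A, m j * d j - σ * ∑ j ∈ A, d j := by
      rw [Finset.mul_sum, ← Finset.sum_sub_distrib]
      exact Finset.sum_congr rfl (fun j _ => by ring)
    rw [hlhs, hrhs, hr, e2]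
    ring


/-- characterization of uniformly safe stochastic matrices:
a column-stochastic `M` satisfies `Mx ≤ d` for all `x ∈ X` iff there exist
`S ≥ 0`, `K ≥ 0` and a vector `s` with `K = M + S + s·1ᵀ` and `s + d ≥ Kd`. -/
theorem stmt10 {n : ℕ} (d : Fin n → ℝ)
    (hd : ∀ i, 0 ≤ d i ∧ d i ≤ 1) (hds : 1 ≤ ∑ i, d i)
    (M : Matrix (Fin n) (Fin n) ℝ)
    (hMnn : ∀ i j, 0 ≤ M i j) (hMcol : ∀ j, ∑ i, M i j = 1) :
    (∀ x ∈ capped n d, ∀ i, M.mulVec x i ≤ d i) ↔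
      ∃ (S K : Matrix (Fin n) (Fin n) ℝ) (s : Fin n → ℝ),
        (∀ i j, 0 ≤ S i j) ∧ (∀ i j, 0 ≤ K i j) ∧
        K = M + S + Matrix.of (fun i (_ : Fin n) => s i) ∧
        (∀ i, K.mulVec d i ≤ s i + d i) := by
  classical
  have hn : 0 < n := by
    rcases Nat.eq_zero_or_pos n with h0 | h0
    · exfalso; subst h0; simp at hds; linarith
    · exact h0
  constructor
  · intro h
    have hkey : ∀ i : Fin n, ∃ σ : ℝ, ∃ x : Fin n → ℝ,
        (∀ j, 0 ≤ x j) ∧ (∀ j, x j ≤ d j) ∧ (∑ j, x j = 1) ∧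
        σ + ∑ j, d j * max (M i j - σ) 0 = ∑ j, M i j * x j :=
      fun i => key hn d (fun j => (hd j).1) hds (fun j => M i j)
    choose σ x hx0 hxd hx1 hval using hkey
    refine ⟨Matrix.of (fun i j => max (σ i - M i j) 0),
      Matrix.of (fun i j => max (M i j - σ i) 0),
      fun i => -(σ i), fun i j => le_max_right _ _, fun i j => le_max_right _ _, ?_, ?_⟩
    · ext i j
      simp only [Matrix.add_apply, Matrix.of_apply]
      rcases le_total (M i j) (σ i) with hc | hc
      · rw [max_eq_right (by linarith), max_eq_left (by linarith)]; ring
      · rw [max_eq_left (by linarith), max_eq_right (by linarith)]; ring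
    · intro i
      have hmem : x i ∈ capped n d := ⟨hx0 i, hxd i, hx1 i⟩
      have hMx : M.mulVec (x i) i ≤ d i := h (x i) hmem i
      have hMx' : (∑ j, M i j * x i j) ≤ d i := by
        simpa [Matrix.mulVec, dotProduct] using hMx
      have hKmul : (Matrix.of (fun i j => max (M i j - σ i) 0)).mulVec d i
          = ∑ j, d j * max (M i j - σ i) 0 := by
        simp only [Matrix.mulVec, dotProduct, Matrix.of_apply]
        exact Finset.sum_congr rfl (fun j _ => mul_comm _ _)
      rw [hKmul]
      dsimp only
      have := hval i
      linarith
  · rintro ⟨S, K, s, hS, hK, hEq, hKd⟩ x ⟨hx0, hxd, hx1⟩ i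
    have hM : ∀ j, M i j = K i j - S i j - s i := by
      intro j
      have := congrFun (congrFun hEq i) j
      simp only [Matrix.add_apply, Matrix.of_apply] at this
      linarith
    have h3 : M.mulVec x i = ∑ j, (K i j - S i j - s i) * x j := by
      simp only [Matrix.mulVec, dotProduct]
      exact Finset.sum_congr rfl (fun j _ => by rw [hM j])
    have h4 : ∑ j, (K i j - S i j - s i) * x j
        = ∑ j, K i j * x j - ∑ j, S i j * x j - s i * ∑ j, x j := by
      rw [Finset.mul_sum, ← Finset.sum_sub_distrib, ← Finset.sum_sub_distrib]
      exact Finset.sum_congr rfl (fun j _ => by ring)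
    have h1 : ∑ j, K i j * x j ≤ ∑ j, K i j * d j :=
      Finset.sum_le_sum (fun j _ => mul_le_mul_of_nonneg_left (hxd j) (hK i j))
    have h2 : 0 ≤ ∑ j, S i j * x j :=
      Finset.sum_nonneg (fun j _ => mul_nonneg (hS i j) (hx0 j))
    have h5 : ∑ j, K i j * d j ≤ s i + d i := by
      have := hKd i
      simpa [Matrix.mulVec, dotProduct] using this
    rw [h3, h4, hx1]
    linarith
end

section
/- Feasibility propagation: if x_1 ∈ X and Q̂_t ∈ C for all t = 1,…,N-1, then the state distributions x_{t+1} = M_t(Q̂_t) x_t satisfy x_t ∈ X (in particular x_t ≤ d) for all t = 1,…,N; hence the policy produced by the constrained backward induction algorithm satisfies the safety constraints at every time step regardless of the initial distribution in X. -/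
open Matrix Finset

/-- feasibility propagation: if `x₁ ∈ X` and every `Q̂_t`
belongs to the uniformly feasible set
`C = {Q row stochastic : M(Q)x ≤ d for all x ∈ X}` (the per-action transition
kernels being column stochastic), then the distributions
`x_{t+1} = M_t(Q̂_t) x_t` satisfy `x_t ∈ X` — in particular `x_t ≤ d` —
for all `t`, regardless of the initial distribution in `X`. -/
theorem stmt19 {n p : ℕ} (d : Fin n → ℝ)
    (pr : ℕ → Fin n → Fin p → Fin n → ℝ)
    (hpr : ∀ t s a, (∀ j, 0 ≤ pr t s a j) ∧ (∑ j, pr t s a j = 1))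
    (Qhat : ℕ → Fin n → Fin p → ℝ)
    (hQ : ∀ t, rowStoch (Qhat t) ∧
      ∀ x ∈ capped n d, ∀ i, (Mof (pr t) (Qhat t)).mulVec x i ≤ d i)
    (x1 : Fin n → ℝ) (hx1 : x1 ∈ capped n d) :
    ∀ t, traj (fun u => Mof (pr u) (Qhat u)) x1 t ∈ capped n d := by
  intro t
  induction t with
  | zero => exact hx1
  | succ t ih =>
    obtain ⟨hy0, hyd, hys⟩ := ih
    obtain ⟨⟨hQ0, hQs⟩, hMd⟩ := hQ t
    refine ⟨?_, ?_, ?_⟩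
    · intro i
      show 0 ≤ (Mof (pr t) (Qhat t)).mulVec _ i
      simp only [Matrix.mulVec, dotProduct, Mof, Matrix.of_apply]
      apply Finset.sum_nonneg
      intro j _
      exact mul_nonneg (Finset.sum_nonneg fun a _ =>
        mul_nonneg (hQ0 j a) ((hpr t j a).1 i)) (hy0 j)
    · exact hMd _ ⟨hy0, hyd, hys⟩
    · show ∑ i, (Mof (pr t) (Qhat t)).mulVec _ i = 1
      simp only [Matrix.mulVec, dotProduct]
      rw [Finset.sum_comm]
      have : ∀ j, ∑ i, Mof (pr t) (Qhat t) i j * traj (fun u => Mof (pr u) (Qhat u)) x1 t j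
          = traj (fun u => Mof (pr u) (Qhat u)) x1 t j := by
        intro j
        rw [← Finset.sum_mul]
        have : ∑ i, Mof (pr t) (Qhat t) i j = 1 := by
          simp only [Mof, Matrix.of_apply]
          rw [Finset.sum_comm]
          calc ∑ a, ∑ i, Qhat t j a * pr t j a i
              = ∑ a, Qhat t j a * ∑ i, pr t j a i := by
                simp [Finset.mul_sum]
            _ = ∑ a, Qhat t j a := by
                simp only [(fun a => (hpr t j a).2), mul_one]
            _ = 1 := hQs j
        rw [this, one_mul]
      simp only [this]
      exact hys
end
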